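/- Any family of pairwise distinct Latin squares of order κ ≥ 2, each having all diagonal entries equal to the symbol 1, whose members are pairwise projective, contains at most κ − 1 Latin squares. -/

import Mathlib

/-- A Latin square of order κ: each symbol occurs exactly once in every row and
exactly once in every column. -/
def IsLatinSquare {κ : ℕ} (L : Fin κ → Fin κ → Fin κ) : Prop :=
  (∀ i : Fin κ, Function.Bijective fun c => L i c) ∧
  (∀ c : Fin κ, Function.Bijective fun i => L i c)

/-- Two Latin squares are projective if for every row index `i` of the first and
every row index `j` of the second there is exactly one column where they agree. -/
def ProjectivePair {κ : ℕ} (L₁ L₂ : Fin κ → Fin κ → Fin κ) : Prop :=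
  ∀ i j : Fin κ, ∃! c : Fin κ, L₁ i c = L₂ j c

/-! All squares of the family share the diagonal, so two of them already agree at `(0, 0)`;
projectivity then forbids them to agree at `(0, 1)`. Hence `L ↦ L 0 1` is injective on the
family, and it avoids the diagonal symbol because rows of a Latin square are injective. -/

section

variable {κ : ℕ}

theorem IsLatinSquare.apply_ne_apply {L : Fin κ → Fin κ → Fin κ} (hL : IsLatinSquare L)
    {r c d : Fin κ} (hcd : c ≠ d) : L r c ≠ L r d :=
  fun h => hcd ((hL.1 r).1 h)

theorem ProjectivePair.eq_of_agree_in_row {L₁ L₂ : Fin κ → Fin κ → Fin κ}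
    (h : ProjectivePair L₁ L₂) {r c d : Fin κ} (hc : L₁ r c = L₂ r c) (hd : L₁ r d = L₂ r d) :
    c = d :=
  (h r r).unique hc hd

theorem injOn_apply_of_diag_eq_of_projective {S : Finset (Fin κ → Fin κ → Fin κ)} {s : Fin κ}
    (hdiag : ∀ L ∈ S, ∀ i : Fin κ, L i i = s)
    (hproj : ∀ L₁ ∈ S, ∀ L₂ ∈ S, L₁ ≠ L₂ → ProjectivePair L₁ L₂)
    {r c : Fin κ} (hrc : r ≠ c) : Set.InjOn (fun L : Fin κ → Fin κ → Fin κ => L r c) S := by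
  intro L₁ h₁ L₂ h₂ hagree
  by_contra hne
  exact hrc <| (hproj L₁ h₁ L₂ h₂ hne).eq_of_agree_in_row
    ((hdiag L₁ h₁ r).trans (hdiag L₂ h₂ r).symm) hagree

end

theorem mpls_card_le {κ : ℕ} (hκ : 2 ≤ κ) (S : Finset (Fin κ → Fin κ → Fin κ))
    (hlatin : ∀ L ∈ S, IsLatinSquare L)
    (hdiag : ∀ L ∈ S, ∀ i : Fin κ, L i i = ⟨1, by omega⟩)
    (hproj : ∀ L₁ ∈ S, ∀ L₂ ∈ S, L₁ ≠ L₂ → ProjectivePair L₁ L₂) :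
    S.card ≤ κ - 1 := by
  set r : Fin κ := ⟨0, by omega⟩
  set s : Fin κ := ⟨1, by omega⟩
  have hrs : r ≠ s := by simp [r, s, Fin.ext_iff]
  have hmaps : ∀ L ∈ S, L r s ∈ Finset.univ.erase s := fun L hL =>
    Finset.mem_erase.2 ⟨fun h => (hlatin L hL).apply_ne_apply hrs.symm
      (h.trans (hdiag L hL r).symm), Finset.mem_univ _⟩
  calc S.card ≤ (Finset.univ.erase s).card :=
        Finset.card_le_card_of_injOn _ hmaps (injOn_apply_of_diag_eq_of_projective hdiag hproj hrs)
    _ = κ - 1 := by simp
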